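/- arXiv:2504.12710 — 3 statements merged into one kernel-verified Lean document; each statement's English description precedes it below -/
import Mathlib

section
/- Let d be a prime and n ≥ 1. Index rows and columns by nonzero vectors s of F_d^n (there are d^n − 1 of them). Define the real matrix A by A_{ij} = 1 if ⟨s_i, s_j⟩ = 1 and 0 otherwise, and define B by B_{ij} = (1/d^{n−1})·(1 if ⟨s_i, s_j⟩ = 1, −1 if ⟨s_i, s_j⟩ = 0, 0 otherwise). Then A·B is the identity matrix; in particular A is invertible. -/
open Finset

namespace Stmt4Aux

set_option linter.unusedSectionVars false

variable {d n : ℕ} [Fact (Nat.Prime d)]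

def dotp (v w : Fin n → ZMod d) : ZMod d := ∑ k, v k * w k

lemma dotp_comm (v w : Fin n → ZMod d) : dotp v w = dotp w v := by
  simp [dotp, mul_comm]

lemma dotp_add_right (v t u : Fin n → ZMod d) : dotp v (t + u) = dotp v t + dotp v u := by
  simp [dotp, mul_add, Finset.sum_add_distrib]

lemma dotp_sub_right (v t u : Fin n → ZMod d) : dotp v (t - u) = dotp v t - dotp v u := by
  simp [dotp, mul_sub, Finset.sum_sub_distrib]

lemma dotp_smul_right (v : Fin n → ZMod d) (c : ZMod d) (t : Fin n → ZMod d) :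
    dotp v (c • t) = c * dotp v t := by
  simp only [dotp, Pi.smul_apply, smul_eq_mul, Finset.mul_sum]
  congr 1; ext k; ring

lemma dotp_smul_left (c : ZMod d) (v t : Fin n → ZMod d) : dotp (c • v) t = c * dotp v t := by
  simp only [dotp, Pi.smul_apply, smul_eq_mul, Finset.mul_sum]
  congr 1; ext k; ring

lemma dotp_zero_right (v : Fin n → ZMod d) : dotp v 0 = 0 := by simp [dotp]

lemma dotp_single (v : Fin n → ZMod d) (k : Fin n) (c : ZMod d) :
    dotp v (Pi.single k c) = v k * c := by
  classical
  rw [dotp, Finset.sum_eq_single k]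
  · simp
  · intro b _ hb; simp [Pi.single_eq_of_ne hb]
  · simp

lemma exists_dotp_eq_one (v : Fin n → ZMod d) (hv : v ≠ 0) : ∃ u, dotp v u = 1 := by
  obtain ⟨k, hk⟩ := Function.ne_iff.mp hv
  refine ⟨Pi.single k (v k)⁻¹, ?_⟩
  rw [dotp_single]
  exact mul_inv_cancel₀ (by simpa using hk)

lemma card_fiber (hn : 1 ≤ n) (v : Fin n → ZMod d) (hv : v ≠ 0) (a : ZMod d) :
    (univ.filter fun t : Fin n → ZMod d => dotp v t = a).card = d ^ (n - 1) := by
  classical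
  obtain ⟨u, hu⟩ := exists_dotp_eq_one v hv
  have key : ∀ a b : ZMod d,
      (univ.filter fun t : Fin n → ZMod d => dotp v t = a).card =
      (univ.filter fun t : Fin n → ZMod d => dotp v t = b).card := by
    intro a b
    apply Finset.card_bij (fun t _ => t + (b - a) • u)
    · intro t ht
      simp only [mem_filter, mem_univ, true_and] at ht ⊢
      rw [dotp_add_right, ht, dotp_smul_right, hu, mul_one]; ring
    · intro t1 _ t2 _ h; exact add_right_cancel h
    · intro s hs
      simp only [mem_filter, mem_univ, true_and] at hs
      refine ⟨s - (b - a) • u, ?_, by abel⟩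
      simp only [mem_filter, mem_univ, true_and]
      rw [dotp_sub_right, hs, dotp_smul_right, hu, mul_one]; ring
  have total : ∑ b : ZMod d, (univ.filter fun t : Fin n → ZMod d => dotp v t = b).card = d ^ n := by
    rw [← Finset.card_eq_sum_card_fiberwise (f := fun t => dotp v t) (t := univ)
      (fun x _ => mem_univ _)]
    simp [Finset.card_univ, ZMod.card]
  have hc : ∀ b : ZMod d, (univ.filter fun t : Fin n → ZMod d => dotp v t = b).card =
      (univ.filter fun t : Fin n → ZMod d => dotp v t = a).card := fun b => key b a
  rw [Finset.sum_congr rfl (fun b _ => hc b), Finset.sum_const, Finset.card_univ, ZMod.card,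
    smul_eq_mul] at total
  have hd0 : 0 < d := (Fact.out : Nat.Prime d).pos
  have : d * (univ.filter fun t : Fin n → ZMod d => dotp v t = a).card = d * d ^ (n - 1) := by
    rw [total, ← pow_succ']
    congr 1
    omega
  exact Nat.eq_of_mul_eq_mul_left hd0 this

lemma exists_perp (v w : Fin n → ZMod d) (hv : v ≠ 0) (h : ∀ c : ZMod d, w ≠ c • v) :
    ∃ u, dotp v u = 0 ∧ dotp w u = 1 := by
  by_cases hcase : ∃ u, dotp v u = 0 ∧ dotp w u ≠ 0
  · obtain ⟨u, h0, h1⟩ := hcase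
    refine ⟨(dotp w u)⁻¹ • u, ?_, ?_⟩
    · rw [dotp_smul_right, h0, mul_zero]
    · rw [dotp_smul_right]; exact inv_mul_cancel₀ h1
  · push_neg at hcase
    obtain ⟨u0, hu0⟩ := exists_dotp_eq_one v hv
    exfalso
    apply h (dotp w u0)
    funext k
    have h1 : dotp v (Pi.single k 1 - (v k) • u0) = 0 := by
      rw [dotp_sub_right, dotp_single, dotp_smul_right, hu0]; ring
    have h2 := hcase _ h1
    rw [dotp_sub_right, dotp_single, dotp_smul_right, mul_one, sub_eq_zero] at h2
    simpa [mul_comm] using h2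


lemma entry (hn : 1 ≤ n) (v w : Fin n → ZMod d) (hv : v ≠ 0) (hw : w ≠ 0) :
    (∑ t : {s : Fin n → ZMod d // s ≠ 0},
      (if (∑ k, v k * (t : Fin n → ZMod d) k) = 1 then (1:ℝ) else 0) *
      ((1 / (d:ℝ) ^ (n-1)) *
        (if (∑ k, (t : Fin n → ZMod d) k * w k) = 1 then (1:ℝ)
         else if (∑ k, (t : Fin n → ZMod d) k * w k) = 0 then -1 else 0)))
    = if v = w then 1 else 0 := by
  classical
  have hd1 : 1 < d := (Fact.out : Nat.Prime d).one_lt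
  haveI : Fact (1 < d) := ⟨hd1⟩
  have hdR : (d:ℝ) ≠ 0 := by positivity
  have hdot : ∀ t : Fin n → ZMod d, (∑ k, t k * w k) = dotp w t := fun t => dotp_comm t w
  have hdot2 : ∀ t : Fin n → ZMod d, (∑ k, v k * t k) = dotp v t := fun _ => rfl
  simp only [hdot, hdot2]
  have step1 : (∑ t : {s : Fin n → ZMod d // s ≠ 0},
      (if dotp v (t : Fin n → ZMod d) = 1 then (1:ℝ) else 0) *
      ((1 / (d:ℝ) ^ (n-1)) *
        (if dotp w (t : Fin n → ZMod d) = 1 then (1:ℝ)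
         else if dotp w (t : Fin n → ZMod d) = 0 then -1 else 0)))
      = ∑ t : Fin n → ZMod d,
      (if dotp v t = 1 then (1:ℝ) else 0) *
      ((1 / (d:ℝ) ^ (n-1)) *
        (if dotp w t = 1 then (1:ℝ) else if dotp w t = 0 then -1 else 0)) := by
    rw [← Finset.sum_subtype (Finset.univ.filter (fun t : Fin n → ZMod d => t ≠ 0))
      (fun x => by simp) (fun t => (if dotp v t = 1 then (1:ℝ) else 0) *
      ((1 / (d:ℝ) ^ (n-1)) *
        (if dotp w t = 1 then (1:ℝ) else if dotp w t = 0 then -1 else 0)))]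
    apply Finset.sum_filter_of_ne
    intro x _ hx
    rintro rfl
    apply hx
    simp [dotp_zero_right]
  rw [step1]
  have hsplit : ∀ t : Fin n → ZMod d,
      (if dotp v t = 1 then (1:ℝ) else 0) *
      ((1 / (d:ℝ) ^ (n-1)) *
        (if dotp w t = 1 then (1:ℝ) else if dotp w t = 0 then -1 else 0))
      = (1 / (d:ℝ) ^ (n-1)) *
        ((if dotp v t = 1 ∧ dotp w t = 1 then (1:ℝ) else 0)
          - (if dotp v t = 1 ∧ dotp w t = 0 then (1:ℝ) else 0)) := by
    intro t
    by_cases h1 : dotp v t = 1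
    · by_cases h2 : dotp w t = 1
      · have h3 : ¬ dotp w t = 0 := by rw [h2]; exact one_ne_zero
        simp [h1, h2, h3]
      · by_cases h3 : dotp w t = 0
        · simp [h1, h2, h3]
        · simp [h1, h2, h3]
    · simp [h1]
  rw [Finset.sum_congr rfl (fun t _ => hsplit t), ← Finset.mul_sum,
    Finset.sum_sub_distrib, Finset.sum_boole, Finset.sum_boole]
  by_cases hvw : v = w
  · subst hvw
    rw [if_pos rfl]
    have e1 : Finset.univ.filter (fun t : Fin n → ZMod d => dotp v t = 1 ∧ dotp v t = 1)
        = Finset.univ.filter (fun t : Fin n → ZMod d => dotp v t = 1) := by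
      simp [and_self]
    have e0 : Finset.univ.filter (fun t : Fin n → ZMod d => dotp v t = 1 ∧ dotp v t = 0)
        = ∅ := by
      rw [Finset.filter_eq_empty_iff]
      rintro t - ⟨h1, h0⟩
      exact one_ne_zero (h1.symm.trans h0)
    rw [e1, e0, card_fiber hn v hv 1]
    simp only [Finset.card_empty, Nat.cast_zero, sub_zero, Nat.cast_pow]
    field_simp
  · rw [if_neg hvw]
    by_cases hmul : ∃ c : ZMod d, w = c • v
    · obtain ⟨c, rfl⟩ := hmul
      have hc0 : c ≠ 0 := by rintro rfl; simp at hw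
      have hc1 : c ≠ 1 := by rintro rfl; simp at hvw
      have e1 : Finset.univ.filter
          (fun t : Fin n → ZMod d => dotp v t = 1 ∧ dotp (c • v) t = 1) = ∅ := by
        rw [Finset.filter_eq_empty_iff]
        rintro t - ⟨h1, h2⟩
        rw [dotp_smul_left, h1, mul_one] at h2
        exact hc1 h2
      have e0 : Finset.univ.filter
          (fun t : Fin n → ZMod d => dotp v t = 1 ∧ dotp (c • v) t = 0) = ∅ := by
        rw [Finset.filter_eq_empty_iff]
        rintro t - ⟨h1, h2⟩
        rw [dotp_smul_left, h1, mul_one] at h2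
        exact hc0 h2
      rw [e1, e0]
      simp
    · push_neg at hmul
      obtain ⟨u, hu0, hu1⟩ := exists_perp v w hv hmul
      have ecard : (Finset.univ.filter
            (fun t : Fin n → ZMod d => dotp v t = 1 ∧ dotp w t = 0)).card
          = (Finset.univ.filter
            (fun t : Fin n → ZMod d => dotp v t = 1 ∧ dotp w t = 1)).card := by
        apply Finset.card_bij (fun t _ => t + u)
        · intro t ht
          simp only [mem_filter, mem_univ, true_and] at ht ⊢
          rw [dotp_add_right, dotp_add_right, ht.1, ht.2, hu0, hu1]
          constructor <;> ring
        · intro a _ b _ h; exact add_right_cancel h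
        · intro s hs
          simp only [mem_filter, mem_univ, true_and] at hs
          refine ⟨s - u, ?_, by abel⟩
          simp only [mem_filter, mem_univ, true_and]
          rw [dotp_sub_right, dotp_sub_right, hs.1, hs.2, hu0, hu1]
          exact ⟨by ring, by ring⟩
      rw [ecard]
      simp

end Stmt4Aux

open Matrix in
theorem stmt_4 (d n : ℕ) (hd : Nat.Prime d) (hn : 1 ≤ n) :
    haveI : Fact (Nat.Prime d) := ⟨hd⟩
    let A : Matrix {s : Fin n → ZMod d // s ≠ 0} {s : Fin n → ZMod d // s ≠ 0} ℝ :=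
      Matrix.of fun i j => if (∑ k, (i : Fin n → ZMod d) k * (j : Fin n → ZMod d) k) = 1 then 1 else 0
    let B : Matrix {s : Fin n → ZMod d // s ≠ 0} {s : Fin n → ZMod d // s ≠ 0} ℝ :=
      Matrix.of fun i j =>
        (1 / (d : ℝ) ^ (n - 1)) *
          (if (∑ k, (i : Fin n → ZMod d) k * (j : Fin n → ZMod d) k) = 1 then 1
           else if (∑ k, (i : Fin n → ZMod d) k * (j : Fin n → ZMod d) k) = 0 then -1 else 0)
    A * B = 1 ∧ IsUnit A := by
  haveI : Fact (Nat.Prime d) := ⟨hd⟩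
  intro A B
  classical
  have hAB : A * B = 1 := by
    ext i j
    rw [Matrix.mul_apply, Matrix.one_apply]
    have H := Stmt4Aux.entry (d := d) hn i.1 j.1 i.2 j.2
    simp only [A, B, Matrix.of_apply]
    simp only [Subtype.ext_iff]
    convert H using 2
  refine ⟨hAB, ?_⟩
  have hdet : A.det * B.det = 1 := by
    rw [← Matrix.det_mul, hAB, Matrix.det_one]
  exact (Matrix.isUnit_iff_isUnit_det A).mpr (IsUnit.of_mul_eq_one _ hdet)
end

section
/- Define C : ℕ → F_d^n by C(0) = 0 and C(b+1) = C(b) + e_{k(b)}, where k(b) is the largest k with d^k dividing b+1 (equivalently, the d-ary carry position) taken so that k(b) < n, and e_k is the k-th standard basis vector of F_d^n. Then C restricted to {0, 1, ..., d^n − 1} is a bijection onto F_d^n. -/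
/-- The d-ary Gray code sequence: `C 0 = 0` and `C (b+1) = C b + e_{k(b)}`, where
`k(b)` is the largest `k` with `d^k ∣ b+1`, capped so that `k(b) < n+1`. -/
def grayCode (d n : ℕ) : ℕ → (Fin (n + 1) → ZMod d)
  | 0 => 0
  | b + 1 => grayCode d n b +
      Pi.single (⟨min (padicValNat d (b + 1)) n, by omega⟩ : Fin (n + 1)) 1

lemma pow_dvd_iff_le_padicValNat {d m j : ℕ} (hd : 2 ≤ d) (hm : m ≠ 0) :
    d ^ j ∣ m ↔ j ≤ padicValNat d m := by
  have hfin : FiniteMultiplicity d m :=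
    Nat.finiteMultiplicity_iff.2 ⟨by omega, Nat.pos_of_ne_zero hm⟩
  rw [padicValNat_def' (by omega) hm,
    hfin.pow_dvd_iff_le_multiplicity]

lemma grayCode_eq (d n : ℕ) (hd : 2 ≤ d) (b : ℕ) (k : Fin (n + 1)) :
    grayCode d n b k =
      ((b / d ^ (k : ℕ) : ℕ) : ZMod d) -
        (if (k : ℕ) < n then ((b / d ^ ((k : ℕ) + 1) : ℕ) : ZMod d) else 0) := by
  induction b with
  | zero => simp [grayCode]
  | succ b ih =>
    have hv : ∀ j : ℕ, (b + 1) / d ^ j = b / d ^ j +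
        if j ≤ padicValNat d (b + 1) then 1 else 0 := by
      intro j
      rw [Nat.succ_div]
      congr 1
      simp [pow_dvd_iff_le_padicValNat hd (by omega : b + 1 ≠ 0)]
    set v := padicValNat d (b + 1) with hvdef
    rw [grayCode, Pi.add_apply, ih, Pi.single_apply, hv, hv]
    have hkn : (k : ℕ) ≤ n := by omega
    simp only [Fin.ext_iff, Fin.val_mk]
    split_ifs <;> first | (exfalso; omega) | (push_cast; ring)

theorem stmt_7 (d n : ℕ) (hd : 2 ≤ d) :
    Function.Bijective (fun b : Fin (d ^ (n + 1)) => grayCode d n b.val) := by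
  haveI : NeZero d := ⟨by omega⟩
  rw [Fintype.bijective_iff_injective_and_card]
  refine ⟨?_, by simp [ZMod.card]⟩
  intro a b hab
  have key : ∀ m, m ≤ n + 1 → a.val / d ^ (n + 1 - m) = b.val / d ^ (n + 1 - m) := by
    intro m
    induction m with
    | zero =>
      intro _
      simp [Nat.div_eq_of_lt a.2, Nat.div_eq_of_lt b.2]
    | succ m ih =>
      intro hm
      have h1 := ih (by omega)
      have hk1 : n + 1 - m = (n - m) + 1 := by omega
      rw [hk1] at h1
      set k := n - m with hkdef
      have hk2 : n + 1 - (m + 1) = k := by omega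
      rw [hk2]
      have hc := congrFun hab ⟨k, by omega⟩
      simp only at hc
      rw [grayCode_eq d n hd, grayCode_eq d n hd] at hc
      simp only [h1] at hc
      have hc2 : ((a.val / d ^ k : ℕ) : ZMod d) = ((b.val / d ^ k : ℕ) : ZMod d) := by
        have := sub_left_inj.mp hc
        exact this
      have hmod : a.val / d ^ k % d = b.val / d ^ k % d := by
        have := congrArg ZMod.val hc2
        simpa [ZMod.val_natCast] using this
      have hdiv : a.val / d ^ k / d = b.val / d ^ k / d := by
        rw [Nat.div_div_eq_div_mul, Nat.div_div_eq_div_mul, ← pow_succ]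
        exact h1
      have e1 := Nat.div_add_mod (a.val / d ^ k) d
      have e2 := Nat.div_add_mod (b.val / d ^ k) d
      have e3 : d * (a.val / d ^ k / d) = d * (b.val / d ^ k / d) := by rw [hdiv]
      omega
  have := key (n + 1) le_rfl
  simp only [Nat.sub_self, pow_zero, Nat.div_one] at this
  exact Fin.ext this
end

section
/- Let d be a prime. Every diagonal unitary on ℂ^{d^n} of the form diag(1, e^{iβ_1}, ..., e^{iβ_{d^n−1}}) can be written as a product ∏_{s ≠ 0} P_{α_s, s, 1} of at most d^n − 1 phase gadgets, for suitable real angles α_s; moreover the map from (α_s) to (β_x) is linear with matrix A_{x,s} = δ_1(⟨x, s⟩), and this matrix is invertible over ℝ. -/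
open Finset

namespace Stmt14Aux

variable {d n : ℕ} [NeZero d]

/-- The dot product on `(ZMod d)^n`. -/
def dot (x s : Fin n → ZMod d) : ZMod d := ∑ i, x i * s i

lemma dot_zero_right (x : Fin n → ZMod d) : dot x 0 = 0 := by simp [dot]

/-- `dot x` as an additive monoid hom in the second variable. -/
def dotHom (x : Fin n → ZMod d) : (Fin n → ZMod d) →+ ZMod d :=
  AddMonoidHom.mk' (fun s => dot x s) (by
    intro a b
    simp [dot, mul_add, Finset.sum_add_distrib])

@[simp] lemma dotHom_apply (x s : Fin n → ZMod d) : dotHom x s = dot x s := rfl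

lemma dot_single (x : Fin n → ZMod d) (k : Fin n) (c : ZMod d) :
    dot x (Pi.single k c) = x k * c := by
  classical
  simp [dot, Pi.single_apply, mul_ite, Finset.sum_ite_eq']

lemma dot_smul_left (c : ZMod d) (x s : Fin n → ZMod d) :
    dot (c • x) s = c * dot x s := by
  simp [dot, Finset.mul_sum, mul_assoc]

lemma dot_add_left (x y s : Fin n → ZMod d) :
    dot (x + y) s = dot x s + dot y s := by
  simp [dot, add_mul, Finset.sum_add_distrib]

lemma dot_smul_right (c : ZMod d) (x s : Fin n → ZMod d) :
    dot x (c • s) = c * dot x s := by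
  simp [dot, Finset.mul_sum, mul_left_comm]

lemma dot_sub_right (x s t : Fin n → ZMod d) :
    dot x (s - t) = dot x s - dot x t := by
  simpa using (dotHom x).map_sub s t

/-- Shifting a fiber of an additive hom by `f t` does not change its cardinality. -/
lemma card_fiber_add {W : Type*} [AddCommGroup W] [DecidableEq W]
    (f : (Fin n → ZMod d) →+ W) (t : Fin n → ZMod d) (w : W) :
    (univ.filter fun s => f s = w + f t).card
      = (univ.filter fun s => f s = w).card := by
  classical
  apply Finset.card_bij' (fun s _ => s - t) (fun s _ => s + t)
  · intro s hs
    simp only [mem_filter, mem_univ, true_and] at hs ⊢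
    rw [map_sub, hs]; abel
  · intro s hs
    simp only [mem_filter, mem_univ, true_and] at hs ⊢
    rw [map_add, hs]
  · intro s _; abel
  · intro s _; abel

lemma exists_ne_zero {x : Fin n → ZMod d} (hx : x ≠ 0) : ∃ j, x j ≠ 0 := by
  by_contra h
  push_neg at h
  exact hx (funext h)

/-- Number of solutions of `⟨x,s⟩ = c` for `x ≠ 0` is `d^(n-1)`. -/
lemma card_dot_eq (hd : d.Prime) {x : Fin n → ZMod d} (hx : x ≠ 0)
    (c : ZMod d) :
    (univ.filter fun s => dot x s = c).card = d ^ (n - 1) := by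
  classical
  haveI := Fact.mk hd
  obtain ⟨j, hj⟩ := exists_ne_zero hx
  have key : ∀ c : ZMod d, (univ.filter fun s => dot x s = c).card
      = (univ.filter fun s => dot x s = 0).card := by
    intro c
    have ht : dot x (Pi.single j ((x j)⁻¹ * c)) = c := by
      rw [dot_single, ← mul_assoc, mul_inv_cancel₀ hj, one_mul]
    have := card_fiber_add (dotHom x) (Pi.single j ((x j)⁻¹ * c)) 0
    simp only [dotHom_apply, ht, zero_add] at this
    convert this using 2
    ext s
    exact Iff.rfl
  have hsum : Fintype.card (Fin n → ZMod d)
      = ∑ c : ZMod d, (univ.filter fun s => dot x s = c).card := by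
    rw [← Finset.card_univ]
    exact Finset.card_eq_sum_card_fiberwise (fun s _ => mem_univ _)
  have hcardV : Fintype.card (Fin n → ZMod d) = d ^ n := by
    simp [Fintype.card_fun]
  have hmul : d ^ n = d * (univ.filter fun s => dot x s = 0).card := by
    rw [← hcardV, hsum]
    simp only [key]
    rw [Finset.sum_const, Finset.card_univ, ZMod.card, smul_eq_mul]
  have heq : d * (univ.filter fun s => dot x s = 0).card = d * d ^ (n - 1) := by
    rw [← hmul, ← pow_succ']
    congr 1
    have hn : 1 ≤ n := j.pos
    omega
  have h0 : (univ.filter fun s => dot x s = 0).card = d ^ (n - 1) :=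
    Nat.eq_of_mul_eq_mul_left hd.pos heq
  exact (key c).trans h0

/-- Off-diagonal counting: for `x ≠ y` both nonzero, the number of `s` with
`⟨x,s⟩=1, ⟨y,s⟩=1` equals the number with `⟨x,s⟩=1, ⟨y,s⟩=0`. -/
lemma card_pair (hd : d.Prime) {x y : Fin n → ZMod d} (hx : x ≠ 0) (hy : y ≠ 0)
    (hxy : x ≠ y) :
    (univ.filter fun s => dot x s = 1 ∧ dot y s = 1).card
      = (univ.filter fun s => dot x s = 1 ∧ dot y s = 0).card := by
  classical
  haveI := Fact.mk hd
  by_cases hspan : ∃ c : ZMod d, y = c • x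
  · obtain ⟨c, rfl⟩ := hspan
    have hc0 : c ≠ 0 := by rintro rfl; simp at hy
    have hc1 : c ≠ 1 := by rintro rfl; simp at hxy
    rw [Finset.filter_false_of_mem, Finset.filter_false_of_mem]
    · intro s _ hs
      obtain ⟨h1, h2⟩ := hs
      rw [dot_smul_left, h1, mul_one] at h2
      exact hc0 h2
    · intro s _ hs
      obtain ⟨h1, h2⟩ := hs
      rw [dot_smul_left, h1, mul_one] at h2
      exact hc1 h2
  · push_neg at hspan
    obtain ⟨j, hj⟩ := exists_ne_zero hx
    set y' : Fin n → ZMod d := y - (y j * (x j)⁻¹) • x with hy'def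
    have hy'j : y' j = 0 := by
      simp only [hy'def, Pi.sub_apply, Pi.smul_apply, smul_eq_mul]
      rw [mul_assoc, inv_mul_cancel₀ hj, mul_one, sub_self]
    have hy' : y' ≠ 0 := by
      intro h
      apply hspan (y j * (x j)⁻¹)
      rw [hy'def, sub_eq_zero] at h
      exact h
    obtain ⟨k, hk⟩ := exists_ne_zero hy'
    set t : Fin n → ZMod d :=
      (y' k)⁻¹ • ((Pi.single k (1 : ZMod d) : Fin n → ZMod d)
        - (x k * (x j)⁻¹) • (Pi.single j (1 : ZMod d) : Fin n → ZMod d)) with htdef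
    have hcomb : ∀ z : Fin n → ZMod d,
        dot z t = (y' k)⁻¹ * (z k - x k * (x j)⁻¹ * z j) := by
      intro z
      rw [htdef, dot_smul_right, dot_sub_right, dot_smul_right, dot_single, dot_single]
      ring
    have hxt : dot x t = 0 := by
      rw [hcomb]
      rw [mul_assoc (x k), inv_mul_cancel₀ hj, mul_one, sub_self, mul_zero]
    have hy't : dot y' t = 1 := by
      rw [hcomb, hy'j, mul_zero, sub_zero, inv_mul_cancel₀ hk]
    have hyt : dot y t = 1 := by
      have hyy : y = y' + (y j * (x j)⁻¹) • x := by rw [hy'def]; abel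
      rw [hyy, dot_add_left, dot_smul_left, hxt, mul_zero, add_zero, hy't]
    set F : (Fin n → ZMod d) →+ (ZMod d × ZMod d) := (dotHom x).prod (dotHom y) with hF
    have hFt : F t = (0, 1) := by
      simp [hF, AddMonoidHom.prod_apply, hxt, hyt]
    have hshift := card_fiber_add F t (1, 0)
    rw [hFt] at hshift
    have h1 : (univ.filter fun s => dot x s = 1 ∧ dot y s = 1)
        = (univ.filter fun s => F s = ((1 : ZMod d), (0 : ZMod d)) + (0, 1)) := by
      apply Finset.filter_congr
      intro s _
      simp [hF, AddMonoidHom.prod_apply, Prod.ext_iff]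
    have h0 : (univ.filter fun s => dot x s = 1 ∧ dot y s = 0)
        = (univ.filter fun s => F s = ((1 : ZMod d), (0 : ZMod d))) := by
      apply Finset.filter_congr
      intro s _
      simp [hF, AddMonoidHom.prod_apply, Prod.ext_iff]
    rw [h1, h0]
    exact hshift

end Stmt14Aux

open Stmt14Aux

open Matrix in
/-- Any diagonal unitary `diag(1, e^{iβ₁}, …)` on `ℂ^{d^n}` is a product of at most
`d^n - 1` phase gadgets `P_{α_s, s, 1}` (diagonal, hence commuting, so the product is
entrywise); the map `α ↦ β` is linear with matrix `A_{x,s} = δ₁(⟨x,s⟩)`, which is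
invertible over `ℝ`. -/
theorem stmt_14 (d n : ℕ) (hd : Nat.Prime d) [NeZero d] (hn : 1 ≤ n) :
    let A : Matrix {v : Fin n → ZMod d // v ≠ 0} {v : Fin n → ZMod d // v ≠ 0} ℝ :=
      Matrix.of fun x s => if (∑ i, (x : Fin n → ZMod d) i * (s : Fin n → ZMod d) i) = 1 then 1 else 0
    IsUnit A ∧
    ∀ β : {v : Fin n → ZMod d // v ≠ 0} → ℝ,
      ∃ α : {v : Fin n → ZMod d // v ≠ 0} → ℝ,
        A.mulVec α = β ∧
        ∀ x : Fin n → ZMod d,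
          Complex.exp (Complex.I * (if h : x = 0 then (0 : ℝ) else β ⟨x, h⟩))
            = ∏ s : {v : Fin n → ZMod d // v ≠ 0},
                Complex.exp (Complex.I * (α s) *
                  (if (∑ i, x i * (s : Fin n → ZMod d) i) = 1 then 1 else 0)) := by
  classical
  haveI := Fact.mk hd
  intro A
  have hAdef : A = Matrix.of fun x s :
      {v : Fin n → ZMod d // v ≠ 0} =>
      if dot (x : Fin n → ZMod d) (s : Fin n → ZMod d) = 1 then (1 : ℝ) else 0 := rfl
  set D : ℝ := (d : ℝ) ^ (n - 1) with hDdef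
  have hD : D ≠ 0 := pow_ne_zero _ (Nat.cast_ne_zero.mpr hd.pos.ne')
  set B : Matrix {v : Fin n → ZMod d // v ≠ 0} {v : Fin n → ZMod d // v ≠ 0} ℝ :=
    Matrix.of fun s y =>
      ((if dot (y : Fin n → ZMod d) (s : Fin n → ZMod d) = 1 then (1 : ℝ) else 0)
        - (if dot (y : Fin n → ZMod d) (s : Fin n → ZMod d) = 0 then (1 : ℝ) else 0)) / D
    with hBdef
  have hAB : A * B = 1 := by
    ext x y
    rw [Matrix.mul_apply, Matrix.one_apply]
    have hterm : ∀ s : {v : Fin n → ZMod d // v ≠ 0},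
        A x s * B s y
          = (fun s : Fin n → ZMod d =>
              ((if dot (x : Fin n → ZMod d) s = 1 ∧ dot (y : Fin n → ZMod d) s = 1
                  then (1:ℝ) else 0)
                - (if dot (x : Fin n → ZMod d) s = 1 ∧ dot (y : Fin n → ZMod d) s = 0
                  then (1:ℝ) else 0)) * D⁻¹) (s : Fin n → ZMod d) := by
      intro s
      rw [hAdef, hBdef]
      simp only [Matrix.of_apply]
      by_cases h1 : dot (x : Fin n → ZMod d) (s : Fin n → ZMod d) = 1 <;>
        by_cases h2 : dot (y : Fin n → ZMod d) (s : Fin n → ZMod d) = 1 <;>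
          by_cases h3 : dot (y : Fin n → ZMod d) (s : Fin n → ZMod d) = 0 <;>
            simp [h1, h2, h3, div_eq_mul_inv] <;> ring
    rw [Finset.sum_congr rfl (fun s _ => hterm s)]
    set g : (Fin n → ZMod d) → ℝ := fun s =>
      ((if dot (x : Fin n → ZMod d) s = 1 ∧ dot (y : Fin n → ZMod d) s = 1
          then (1:ℝ) else 0)
        - (if dot (x : Fin n → ZMod d) s = 1 ∧ dot (y : Fin n → ZMod d) s = 0
          then (1:ℝ) else 0)) * D⁻¹ with hgdef
    have hsub : ∑ s : {v : Fin n → ZMod d // v ≠ 0}, g (s : Fin n → ZMod d)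
        = ∑ s : Fin n → ZMod d, g s := by
      rw [← Finset.sum_subtype (univ.filter fun v : Fin n → ZMod d => v ≠ 0)
        (by simp) g]
      rw [Finset.filter_ne']
      apply Finset.sum_erase
      have : dot (x : Fin n → ZMod d) (0 : Fin n → ZMod d) = 0 := dot_zero_right _
      simp [hgdef, this]
    rw [hsub]
    have hsplit : ∑ s : Fin n → ZMod d, g s
        = (((univ.filter fun s => dot (x : Fin n → ZMod d) s = 1
              ∧ dot (y : Fin n → ZMod d) s = 1).card : ℝ)
          - ((univ.filter fun s => dot (x : Fin n → ZMod d) s = 1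
              ∧ dot (y : Fin n → ZMod d) s = 0).card : ℝ)) * D⁻¹ := by
      rw [hgdef]
      rw [← Finset.sum_mul, Finset.sum_sub_distrib, Finset.sum_boole, Finset.sum_boole]
    rw [hsplit]
    by_cases hxy : x = y
    · subst hxy
      rw [if_pos rfl]
      have hc1 : (univ.filter fun s => dot (x : Fin n → ZMod d) s = 1
          ∧ dot (x : Fin n → ZMod d) s = 1)
          = (univ.filter fun s => dot (x : Fin n → ZMod d) s = 1) := by
        apply Finset.filter_congr; intro s _; simp
      have hc0 : (univ.filter fun s => dot (x : Fin n → ZMod d) s = 1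
          ∧ dot (x : Fin n → ZMod d) s = 0) = ∅ := by
        apply Finset.filter_false_of_mem
        intro s _ hs
        exact one_ne_zero (hs.1 ▸ hs.2)
      rw [hc1, hc0, card_dot_eq hd x.prop 1]
      simp only [Finset.card_empty, Nat.cast_zero, sub_zero]
      rw [hDdef]
      push_cast
      exact mul_inv_cancel₀ hD
    · rw [if_neg hxy]
      have hne : (x : Fin n → ZMod d) ≠ (y : Fin n → ZMod d) :=
        fun h => hxy (Subtype.ext h)
      rw [card_pair hd x.prop y.prop hne]
      ring
  have hBA : B * A = 1 := mul_eq_one_comm.mp hAB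
  refine ⟨⟨⟨A, B, hAB, hBA⟩, rfl⟩, ?_⟩
  intro β
  refine ⟨B.mulVec β, ?_, ?_⟩
  · rw [Matrix.mulVec_mulVec, hAB, Matrix.one_mulVec]
  · set α := B.mulVec β with hα
    have hA : A.mulVec α = β := by
      rw [hα, Matrix.mulVec_mulVec, hAB, Matrix.one_mulVec]
    intro x
    by_cases hx0 : x = 0
    · subst hx0
      rw [dif_pos rfl]
      have : ∀ s : {v : Fin n → ZMod d // v ≠ 0},
          (∑ i, (0 : Fin n → ZMod d) i * (s : Fin n → ZMod d) i) ≠ 1 := by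
        intro s
        simp only [Pi.zero_apply, zero_mul, Finset.sum_const_zero]
        exact zero_ne_one
      simp [this]
    · rw [dif_neg hx0]
      rw [← Complex.exp_sum]
      congr 1
      have hβ : β ⟨x, hx0⟩ = ∑ s : {v : Fin n → ZMod d // v ≠ 0},
          (if (∑ i, x i * (s : Fin n → ZMod d) i) = 1 then (1:ℝ) else 0) * α s := by
        rw [← hA]
        rfl
      rw [hβ]
      push_cast [apply_ite (Complex.ofReal)]
      rw [Finset.mul_sum]
      refine Finset.sum_congr rfl fun s _ => ?_
      ring
end
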